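/- arXiv:1903.11095 — 2 statements merged into one kernel-verified Lean document; each statement's English description precedes it below -/
import Mathlib

section
/- Let F be a field and n ≥ m natural numbers. The tensor product over F[X] of the two-term complexes (F[X] --X^n--> F[X]) and (F[X] --X^m--> F[X]) is isomorphic, as a complex of F[X]-modules, to the direct sum of two copies of the complex (F[X] --X^m--> F[X]) (in appropriate homological degrees). -/
/-!
After identifying `F[X] ⊗ F[X]` with `F[X]`, the total complex is the Koszul complex
`F[X] --(-Xᵐ, Xⁿ)--> F[X]² --(Xⁿ, Xᵐ)--> F[X]`. Since `Xᵐ ∣ Xⁿ`, the shear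
`(a, b) ↦ (a, b + Xⁿ⁻ᵐ a)` of the middle term kills the second component of the first
differential (negating the degree-2 term fixes the sign of the first) and turns the
second one into `(a, b) ↦ Xᵐ b`, splitting the complex.
-/

open Polynomial TensorProduct

section KoszulSplitting

variable {R M N : Type*} [CommRing R] [AddCommGroup M] [Module R M] [AddCommGroup N] [Module R N]

theorem exists_linearEquiv_koszul_split (e : M ≃ₗ[R] N) {s t c : R} (hst : s = c * t) :
    ∃ (e₂ : M ≃ₗ[R] N) (e₁ : (M × M) ≃ₗ[R] (N × N)) (e₀ : M ≃ₗ[R] N),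
      e₁.toLinearMap ∘ₗ LinearMap.prod (-(t • LinearMap.id)) (s • LinearMap.id) =
          LinearMap.prod (t • LinearMap.id) 0 ∘ₗ e₂.toLinearMap ∧
        e₀.toLinearMap ∘ₗ ((s • LinearMap.id) ∘ₗ LinearMap.fst R M M +
            (t • LinearMap.id) ∘ₗ LinearMap.snd R M M) =
          ((t • LinearMap.id) ∘ₗ LinearMap.snd R N N) ∘ₗ e₁.toLinearMap := by
  refine ⟨LinearEquiv.neg R ≪≫ₗ e,
    (LinearEquiv.refl R M).skewProd (LinearEquiv.refl R M) (c • LinearMap.id) ≪≫ₗ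
      e.prodCongr e, e, ?_, ?_⟩
  · ext x <;> simp [hst, mul_smul]
  · ext x <;> simp [hst, mul_smul, smul_comm c t]

end KoszulSplitting

/-- For `m ≤ n`, the total complex of the tensor product over `F[X]` of the two-term
complexes `F[X] --Xⁿ--> F[X]` and `F[X] --Xᵐ--> F[X]` (which is the three-term complex
`F[X]⊗F[X] → (F[X]⊗F[X]) × (F[X]⊗F[X]) → F[X]⊗F[X]` with Koszul-signed differentials)
is isomorphic, as a complex of `F[X]`-modules, to the direct sum of two copies of the
two-term complex `F[X] --Xᵐ--> F[X]`, placed in degrees (2,1) and (1,0) respectively. -/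
theorem stmt1 (F : Type) [Field F] (n m : ℕ) (h : m ≤ n) :
    -- multiplication by Xⁿ resp. Xᵐ on F[X]
    ∀ (f g : Polynomial F →ₗ[Polynomial F] Polynomial F),
      f = (X : Polynomial F) ^ n • LinearMap.id →
      g = (X : Polynomial F) ^ m • LinearMap.id →
      -- differentials of the total complex of the tensor product
      ∀ (d₂ : (Polynomial F ⊗[Polynomial F] Polynomial F) →ₗ[Polynomial F]
              ((Polynomial F ⊗[Polynomial F] Polynomial F) ×
               (Polynomial F ⊗[Polynomial F] Polynomial F)))
        (d₁ : ((Polynomial F ⊗[Polynomial F] Polynomial F) ×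
               (Polynomial F ⊗[Polynomial F] Polynomial F)) →ₗ[Polynomial F]
              (Polynomial F ⊗[Polynomial F] Polynomial F)),
        d₂ = LinearMap.prod (-(TensorProduct.map (LinearMap.id : Polynomial F →ₗ[Polynomial F] Polynomial F) g)) (TensorProduct.map f (LinearMap.id : Polynomial F →ₗ[Polynomial F] Polynomial F)) →
        d₁ = (TensorProduct.map f (LinearMap.id : Polynomial F →ₗ[Polynomial F] Polynomial F)) ∘ₗ LinearMap.fst _ _ _ +
             (TensorProduct.map (LinearMap.id : Polynomial F →ₗ[Polynomial F] Polynomial F) g) ∘ₗ LinearMap.snd _ _ _ →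
      -- there is an isomorphism of complexes onto the direct sum of two copies of
      -- `F[X] --Xᵐ--> F[X]`, in degrees (2,1) and (1,0)
      ∃ (e₂ : (Polynomial F ⊗[Polynomial F] Polynomial F) ≃ₗ[Polynomial F] Polynomial F)
        (e₁ : ((Polynomial F ⊗[Polynomial F] Polynomial F) ×
               (Polynomial F ⊗[Polynomial F] Polynomial F)) ≃ₗ[Polynomial F]
              (Polynomial F × Polynomial F))
        (e₀ : (Polynomial F ⊗[Polynomial F] Polynomial F) ≃ₗ[Polynomial F] Polynomial F),
        (e₁.toLinearMap ∘ₗ d₂ =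
          (LinearMap.prod ((X : Polynomial F) ^ m • LinearMap.id) 0) ∘ₗ e₂.toLinearMap) ∧
        (e₀.toLinearMap ∘ₗ d₁ =
          (((X : Polynomial F) ^ m • LinearMap.id) ∘ₗ LinearMap.snd _ _ _) ∘ₗ e₁.toLinearMap) := by
  intro f g hf hg d₂ d₁ hd₂ hd₁
  subst hf hg hd₂ hd₁
  simp only [map_smul_left, map_smul_right, TensorProduct.map_id]
  exact exists_linearEquiv_koszul_split (TensorProduct.lid _ _) (pow_sub_mul_pow (X : F[X]) h).symm
end

section
/- Let V = R[T][X]/(X^2 - T) over a commutative ring R, with comultiplication Δ: V → V ⊗_{R[T]} V defined on the basis by Δ(1) = 1⊗X + X⊗1 and Δ(X) = X⊗X + T·(1⊗1), extended R[T]-linearly. Then Δ is a map of V-bimodules, i.e., Δ(v·w) = (v⊗1)·Δ(w) = Δ(v)·(1⊗w) for all v, w ∈ V. -/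
open Polynomial TensorProduct
set_option maxHeartbeats 1000000

section Stmt5Aux
variable (R : Type) [CommRing R]

local notation "fp" => ((X : Polynomial (Polynomial R)) ^ 2 - C (X : Polynomial R))
local notation "V" => AdjoinRoot ((X : Polynomial (Polynomial R)) ^ 2 - C (X : Polynomial R))
local notation "r" => AdjoinRoot.root ((X : Polynomial (Polynomial R)) ^ 2 - C (X : Polynomial R))
local notation "T" => (X : Polynomial R)

lemma stmt5_hr2 : r ^ 2 = T • (1 : V) := by
  have h : (AdjoinRoot.mk fp) fp = 0 := AdjoinRoot.mk_self
  rw [map_sub, map_pow, AdjoinRoot.mk_X, AdjoinRoot.mk_C, sub_eq_zero] at h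
  rw [h, Algebra.smul_def, AdjoinRoot.algebraMap_eq, mul_one]

lemma stmt5_hpow (n : ℕ) : r ^ (n + 2) = T • r ^ n := by
  rw [pow_add, stmt5_hr2, mul_smul_comm, mul_one]

lemma stmt5_hmono (n : ℕ) (a : Polynomial R) :
    AdjoinRoot.mk fp ((Polynomial.monomial n) a) = a • r ^ n := by
  rw [← C_mul_X_pow_eq_monomial, map_mul, map_pow, AdjoinRoot.mk_X, AdjoinRoot.mk_C,
    Algebra.smul_def, AdjoinRoot.algebraMap_eq]

lemma stmt5_aux (Δ : V →ₗ[Polynomial R] (V ⊗[Polynomial R] V))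
    (h1 : Δ 1 = 1 ⊗ₜ r + r ⊗ₜ 1)
    (hX : Δ r = r ⊗ₜ r + T • ((1 : V) ⊗ₜ (1 : V))) :
    ∀ v w : V, Δ (v * w) = (v ⊗ₜ 1) * Δ w ∧ Δ (v * w) = Δ v * (1 ⊗ₜ w) := by
  have e1 : ((r : V) * r) = T • (1 : V) := by rw [← pow_two, stmt5_hr2]
  have baseA0 : Δ (r * r ^ 0) = ((r : V) ⊗ₜ (1 : V)) * Δ (r ^ 0) := by
    rw [pow_zero, mul_one, hX, h1]
    simp only [mul_add, Algebra.TensorProduct.tmul_mul_tmul, one_mul, mul_one, e1, smul_tmul']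
  have baseA1 : Δ (r * r ^ 1) = ((r : V) ⊗ₜ (1 : V)) * Δ (r ^ 1) := by
    rw [pow_one, ← pow_two, stmt5_hr2, map_smul, h1, hX]
    simp only [mul_add, mul_smul_comm, Algebra.TensorProduct.tmul_mul_tmul, one_mul, mul_one,
      e1, smul_tmul', smul_add]
  have baseB0 : Δ (r ^ 0 * r) = Δ (r ^ 0) * ((1 : V) ⊗ₜ (r : V)) := by
    rw [pow_zero, one_mul, hX, h1]
    simp only [add_mul, Algebra.TensorProduct.tmul_mul_tmul, one_mul, mul_one, e1,
      tmul_smul, smul_tmul']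
    rw [add_comm]
  have baseB1 : Δ (r ^ 1 * r) = Δ (r ^ 1) * ((1 : V) ⊗ₜ (r : V)) := by
    rw [pow_one, ← pow_two, stmt5_hr2, map_smul, h1, hX]
    simp only [add_mul, smul_mul_assoc, Algebra.TensorProduct.tmul_mul_tmul, one_mul, mul_one,
      e1, tmul_smul, smul_tmul', smul_add]
    rw [add_comm]
  have hApow : ∀ n : ℕ, Δ (r * r ^ n) = ((r : V) ⊗ₜ (1 : V)) * Δ (r ^ n) := by
    intro n
    induction n using Nat.strong_induction_on with
    | _ n ih =>
      match n with
      | 0 => exact baseA0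
      | 1 => exact baseA1
      | (m + 2) =>
        rw [stmt5_hpow, mul_smul_comm, map_smul, map_smul, ih m (by omega), mul_smul_comm]
  have hBpow : ∀ n : ℕ, Δ (r ^ n * r) = Δ (r ^ n) * ((1 : V) ⊗ₜ (r : V)) := by
    intro n
    induction n using Nat.strong_induction_on with
    | _ n ih =>
      match n with
      | 0 => exact baseB0
      | 1 => exact baseB1
      | (m + 2) =>
        rw [stmt5_hpow, smul_mul_assoc, map_smul, map_smul, ih m (by omega), smul_mul_assoc]
  have hA : ∀ w : V, Δ (r * w) = ((r : V) ⊗ₜ (1 : V)) * Δ w := by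
    intro w
    refine AdjoinRoot.induction_on _ w (fun p => ?_)
    induction p using Polynomial.induction_on' with
    | add p q hp hq => rw [map_add, mul_add, map_add, map_add, mul_add, hp, hq]
    | monomial n a =>
      rw [stmt5_hmono, mul_smul_comm, map_smul, map_smul, hApow, mul_smul_comm]
  have hB : ∀ v : V, Δ (v * r) = Δ v * ((1 : V) ⊗ₜ (r : V)) := by
    intro v
    refine AdjoinRoot.induction_on _ v (fun p => ?_)
    induction p using Polynomial.induction_on' with
    | add p q hp hq => rw [map_add, add_mul, map_add, map_add, add_mul, hp, hq]
    | monomial n a =>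
      rw [stmt5_hmono, smul_mul_assoc, map_smul, map_smul, hBpow, smul_mul_assoc]
  have hApow' : ∀ (n : ℕ) (w : V), Δ (r ^ n * w) = ((r ^ n : V) ⊗ₜ (1 : V)) * Δ w := by
    intro n
    induction n with
    | zero => intro w; rw [pow_zero, one_mul, ← Algebra.TensorProduct.one_def, one_mul]
    | succ m ih =>
      intro w
      have h2 : (AdjoinRoot.root fp) ^ (m + 1) * w
          = (AdjoinRoot.root fp) * ((AdjoinRoot.root fp) ^ m * w) := by ring
      have h3 : (AdjoinRoot.root fp) * (AdjoinRoot.root fp) ^ m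
          = (AdjoinRoot.root fp) ^ (m + 1) := by ring
      rw [h2, hA, ih, ← mul_assoc, Algebra.TensorProduct.tmul_mul_tmul, mul_one, h3]
  have hBpow' : ∀ (n : ℕ) (v : V), Δ (v * r ^ n) = Δ v * ((1 : V) ⊗ₜ (r ^ n : V)) := by
    intro n
    induction n with
    | zero => intro v; rw [pow_zero, mul_one, ← Algebra.TensorProduct.one_def, mul_one]
    | succ m ih =>
      intro v
      have h2 : v * (AdjoinRoot.root fp) ^ (m + 1)
          = (v * (AdjoinRoot.root fp) ^ m) * (AdjoinRoot.root fp) := by ring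
      have h3 : (AdjoinRoot.root fp) ^ m * (AdjoinRoot.root fp)
          = (AdjoinRoot.root fp) ^ (m + 1) := by ring
      rw [h2, hB, ih, mul_assoc, Algebra.TensorProduct.tmul_mul_tmul, one_mul, h3]
  intro v w
  constructor
  · refine AdjoinRoot.induction_on _ v (fun p => ?_)
    induction p using Polynomial.induction_on' with
    | add p q hp hq => rw [map_add, add_mul, map_add, hp, hq, add_tmul, add_mul]
    | monomial n a =>
      rw [stmt5_hmono, smul_mul_assoc, map_smul, hApow', ← smul_tmul', smul_mul_assoc]
  · refine AdjoinRoot.induction_on _ w (fun p => ?_)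
    induction p using Polynomial.induction_on' with
    | add p q hp hq => rw [map_add, mul_add, map_add, hp, hq, tmul_add, mul_add]
    | monomial n a =>
      rw [stmt5_hmono, mul_smul_comm, map_smul, hBpow', tmul_smul, mul_smul_comm]

end Stmt5Aux

/-- In `V = R[T][X]/(X² - T)`, the `R[T]`-linear comultiplication `Δ` defined on the
basis `{1, X}` by `Δ(1) = 1⊗X + X⊗1` and `Δ(X) = X⊗X + T·(1⊗1)` is a map of
`V`-bimodules: `Δ(v·w) = (v⊗1)·Δ(w)` and `Δ(v·w) = Δ(v)·(1⊗w)` for all `v, w ∈ V`. -/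
theorem stmt5 (R : Type) [CommRing R]
    (Δ : AdjoinRoot ((X : Polynomial (Polynomial R)) ^ 2 - C (X : Polynomial R)) →ₗ[Polynomial R]
      (AdjoinRoot ((X : Polynomial (Polynomial R)) ^ 2 - C (X : Polynomial R)) ⊗[Polynomial R]
       AdjoinRoot ((X : Polynomial (Polynomial R)) ^ 2 - C (X : Polynomial R))))
    (h1 : Δ 1 = 1 ⊗ₜ AdjoinRoot.root _ + AdjoinRoot.root _ ⊗ₜ 1)
    (hX : Δ (AdjoinRoot.root _) =
      AdjoinRoot.root _ ⊗ₜ AdjoinRoot.root _ + (X : Polynomial R) • ((1 : _) ⊗ₜ (1 : _))) :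
    ∀ v w, Δ (v * w) = (v ⊗ₜ 1) * Δ w ∧ Δ (v * w) = Δ v * (1 ⊗ₜ w) := by
  exact stmt5_aux R Δ h1 hX
end
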